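/- Let 0 < μ ≤ L, Q := L/μ, σ ∈ [0, 1), and 0 < α ≤ (1−σ²)²/(187QL). Then det(I₃ − J_α) = (1−σ²)²μα/16 − 348L⁴α³/(μ(1−σ²)²) − 120μL²α³/(1−σ²)², and moreover det(I₃ − J_α) ≥ (1−σ²)²μα/32 > 0; in particular I₃ − J_α is invertible. -/
import Mathlib


/-- The system matrix `J_α` governing GT-SVRG. -/
noncomputable def GTSVRGMatrixJ (μ L σ α : ℝ) : Matrix (Fin 3) (Fin 3) ℝ :=
  !![(1 + σ ^ 2) / 2, 0, 2 * α ^ 2 * L ^ 2 / (1 - σ ^ 2);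
     2 * L ^ 2 * α / μ, 1 - μ * α / 2, 0;
     120 / (1 - σ ^ 2), 87 / (1 - σ ^ 2), (3 + σ ^ 2) / 4]

set_option maxHeartbeats 1000000 in
/-- For `0 < α ≤ (1−σ²)²/(187QL)`,
`det(I₃ − J_α) = (1−σ²)²μα/16 − 348L⁴α³/(μ(1−σ²)²) − 120μL²α³/(1−σ²)²`, and this
determinant is at least `(1−σ²)²μα/32 > 0`; in particular `I₃ − J_α` is
invertible. -/
theorem gtsvrg_det_bound (μ L σ α Q : ℝ)
    (hμ : 0 < μ) (hμL : μ ≤ L) (hQ : Q = L / μ)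
    (hσ0 : 0 ≤ σ) (hσ1 : σ < 1)
    (hα0 : 0 < α) (hα : α ≤ (1 - σ ^ 2) ^ 2 / (187 * Q * L)) :
    (1 - GTSVRGMatrixJ μ L σ α).det =
        (1 - σ ^ 2) ^ 2 * μ * α / 16 - 348 * L ^ 4 * α ^ 3 / (μ * (1 - σ ^ 2) ^ 2) -
          120 * μ * L ^ 2 * α ^ 3 / (1 - σ ^ 2) ^ 2 ∧
      (1 - σ ^ 2) ^ 2 * μ * α / 32 ≤ (1 - GTSVRGMatrixJ μ L σ α).det ∧
        0 < (1 - GTSVRGMatrixJ μ L σ α).det ∧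
          IsUnit (1 - GTSVRGMatrixJ μ L σ α) := by
  have hL : 0 < L := lt_of_lt_of_le hμ hμL
  have hs : 0 < 1 - σ ^ 2 := by nlinarith
  have hs' : (1 - σ ^ 2) ≠ 0 := ne_of_gt hs
  have hμ' : μ ≠ 0 := ne_of_gt hμ
  have hdet : (1 - GTSVRGMatrixJ μ L σ α).det =
      (1 - σ ^ 2) ^ 2 * μ * α / 16 - 348 * L ^ 4 * α ^ 3 / (μ * (1 - σ ^ 2) ^ 2) -
        120 * μ * L ^ 2 * α ^ 3 / (1 - σ ^ 2) ^ 2 := by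
    have h1 : (1 : Matrix (Fin 3) (Fin 3) ℝ) - GTSVRGMatrixJ μ L σ α =
        !![(1 - σ ^ 2) / 2, 0, -(2 * α ^ 2 * L ^ 2 / (1 - σ ^ 2));
           -(2 * L ^ 2 * α / μ), μ * α / 2, 0;
           -(120 / (1 - σ ^ 2)), -(87 / (1 - σ ^ 2)), (1 - σ ^ 2) / 4] := by
      rw [GTSVRGMatrixJ]
      ext i j
      fin_cases i <;> fin_cases j <;>
        simp [Matrix.one_apply, Matrix.sub_apply] <;> ring
    rw [h1]
    simp [Matrix.det_fin_three]
    field_simp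
    ring
  have hge : (1 - σ ^ 2) ^ 2 * μ * α / 32 ≤ (1 - GTSVRGMatrixJ μ L σ α).det := by
    -- key bound: α ≤ (1-σ²)²μ/(187 L²)
    have hα2 : α * (187 * L ^ 2 / μ) ≤ (1 - σ ^ 2) ^ 2 := by
      have h187 : 0 < 187 * Q * L := by
        rw [hQ]; positivity
      have := (le_div_iff₀ h187).mp hα
      rw [hQ] at this
      calc α * (187 * L ^ 2 / μ) = α * (187 * (L / μ) * L) := by ring
        _ ≤ (1 - σ ^ 2) ^ 2 := this
    have hα3 : α * 187 * L ^ 2 ≤ (1 - σ ^ 2) ^ 2 * μ := by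
      have h := mul_le_mul_of_nonneg_right hα2 (le_of_lt hμ)
      have heq : α * (187 * L ^ 2 / μ) * μ = α * 187 * L ^ 2 := by
        field_simp
      linarith [heq ▸ h]
    rw [hdet]
    rw [div_le_iff₀ (by positivity), sub_sub, sub_mul]
    have key : (348 * L ^ 4 * α ^ 3 / (μ * (1 - σ ^ 2) ^ 2) +
        120 * μ * L ^ 2 * α ^ 3 / (1 - σ ^ 2) ^ 2) * 32 ≤ (1 - σ ^ 2) ^ 2 * μ * α := by
      rw [div_add_div _ _ (by positivity) (by positivity), div_mul_eq_mul_div,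
        div_le_iff₀ (by positivity)]
      have h1 : α * L ^ 2 ≤ (1 - σ ^ 2) ^ 2 * μ / 187 := by linarith
      have hsq : α ^ 2 * L ^ 4 ≤ (1 - σ ^ 2) ^ 4 * μ ^ 2 / 34969 := by
        nlinarith [mul_le_mul h1 h1 (by positivity : (0:ℝ) ≤ α * L ^ 2) (by positivity)]
      have hμL2' : μ ^ 2 * L ^ 2 ≤ L ^ 4 := by
        nlinarith [mul_le_mul_of_nonneg_right (show μ ^ 2 ≤ L ^ 2 by nlinarith) (sq_nonneg L)]
      have h2 : α ^ 2 * (μ ^ 2 * L ^ 2) ≤ α ^ 2 * L ^ 4 :=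
        mul_le_mul_of_nonneg_left hμL2' (sq_nonneg α)
      linarith [mul_le_mul_of_nonneg_left hsq
          (show (0:ℝ) ≤ (1 - σ ^ 2) ^ 2 * α by positivity),
        mul_le_mul_of_nonneg_left h2
          (show (0:ℝ) ≤ (1 - σ ^ 2) ^ 2 * α by positivity),
        mul_pos (mul_pos (pow_pos hs 6) (pow_pos hμ 2)) hα0]
    linarith [key]
  have hpos : 0 < (1 - GTSVRGMatrixJ μ L σ α).det :=
    lt_of_lt_of_le (by positivity) hge
  exact ⟨hdet, hge, hpos, (Matrix.isUnit_iff_isUnit_det _).mpr (isUnit_iff_ne_zero.mpr (ne_of_gt hpos))⟩
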